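/- arXiv:1106.4646 — 2 statements merged into one kernel-verified Lean document; each statement's English description precedes it below -/
import Mathlib

section
/- Let λ > 1 be real and let A : ℝ² → ℝ² be the linear map A(x,y) = (λ·x, λ⁻¹·y). If L is an additive subgroup of ℝ² which is discrete (there is ε > 0 such that the only element of L with norm less than ε is 0) and satisfies A(L) = L, then L contains no nonzero vector of the form (x, 0) and no nonzero vector of the form (0, y). (The nonzero axis vectors are exactly the nonzero isotropic vectors of the Minkowskian form preserved by the hyperbolic rotation A.) -/
open Filter Topology

theorem pow_smul_mem_of_smul_mem_line {R M : Type*} [Monoid R] [AddGroup M] [MulAction R M]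
    (L : AddSubgroup M) {c : R} {v : M} (hv : v ∈ L)
    (hstep : ∀ t : R, t • v ∈ L → (c * t) • v ∈ L) (n : ℕ) : c ^ n • v ∈ L := by
  induction n with
  | zero => simpa using hv
  | succ n ih => simpa only [pow_succ'] using hstep _ ih

section DiscreteSubgroup

variable {𝕜 E : Type*} [NormedField 𝕜] [NormedAddCommGroup E] [NormedSpace 𝕜 E]

theorem eq_zero_of_forall_pow_smul_mem (L : AddSubgroup E)
    (hdisc : ∃ ε > 0, ∀ v ∈ L, ‖v‖ < ε → v = 0) {c : 𝕜} (hc0 : c ≠ 0) (hc : ‖c‖ < 1) {v : E}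
    (hv : ∀ n : ℕ, c ^ n • v ∈ L) : v = 0 := by
  obtain ⟨ε, hε, hsmall⟩ := hdisc
  have hlim : Tendsto (fun n : ℕ => c ^ n • v) atTop (𝓝 0) := by
    simpa using (tendsto_pow_atTop_nhds_zero_of_norm_lt_one hc).smul_const v
  obtain ⟨n, hn⟩ := (hlim.eventually (Metric.ball_mem_nhds 0 hε)).exists
  have hzero : c ^ n • v = 0 := hsmall _ (hv n) (mem_ball_zero_iff.mp hn)
  exact (smul_eq_zero.mp hzero).resolve_left (pow_ne_zero n hc0)

theorem eq_zero_of_mem_of_smul_mem_line (L : AddSubgroup E)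
    (hdisc : ∃ ε > 0, ∀ v ∈ L, ‖v‖ < ε → v = 0) {c : 𝕜} (hc0 : c ≠ 0) (hc : ‖c‖ < 1) {v : E}
    (hv : v ∈ L) (hstep : ∀ t : 𝕜, t • v ∈ L → (c * t) • v ∈ L) : v = 0 :=
  eq_zero_of_forall_pow_smul_mem L hdisc hc0 hc (pow_smul_mem_of_smul_mem_line L hv hstep)

end DiscreteSubgroup

/-- let `λ > 1` and let `A(x,y) = (λx, λ⁻¹y)` be the corresponding
hyperbolic rotation of the Minkowskian plane. If `L` is a discrete additive
subgroup of `ℝ²` with `A(L) = L`, then `L` contains no nonzero isotropic vector,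
i.e. no nonzero vector of the form `(x,0)` or `(0,y)`. -/
theorem no_isotropic_vector_in_invariant_discrete_lattice
    (lam : ℝ) (hlam : 1 < lam) (L : AddSubgroup (ℝ × ℝ))
    (hdisc : ∃ ε > 0, ∀ v ∈ L, ‖v‖ < ε → v = 0)
    (hinv : ∀ v : ℝ × ℝ, v ∈ L ↔ (lam * v.1, lam⁻¹ * v.2) ∈ L) :
    (∀ x : ℝ, x ≠ 0 → (x, (0 : ℝ)) ∉ L) ∧
    (∀ y : ℝ, y ≠ 0 → ((0 : ℝ), y) ∉ L) := by
  have hlam_pos : 0 < lam := zero_lt_one.trans hlam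
  have hlam0 : lam ≠ 0 := hlam_pos.ne'
  have hc : ‖lam⁻¹‖ < 1 := by
    rwa [Real.norm_eq_abs, abs_of_pos (inv_pos.mpr hlam_pos), inv_lt_one₀ hlam_pos]
  -- `A⁻¹` contracts the first axis and `A` contracts the second, both by the factor `lam⁻¹`.
  refine ⟨fun x hx hxL => hx ?_, fun y hy hyL => hy ?_⟩
  · have hstep : ∀ t : ℝ, t • (x, (0 : ℝ)) ∈ L → (lam⁻¹ * t) • (x, (0 : ℝ)) ∈ L := by
      intro t ht
      refine (hinv _).2 ?_
      convert ht using 1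
      ext <;> simp [← mul_assoc, mul_inv_cancel₀ hlam0]
    simpa using eq_zero_of_mem_of_smul_mem_line L hdisc (inv_ne_zero hlam0) hc hxL hstep
  · have hstep : ∀ t : ℝ, t • ((0 : ℝ), y) ∈ L → (lam⁻¹ * t) • ((0 : ℝ), y) ∈ L := by
      intro t ht
      convert (hinv _).1 ht using 1
      ext <;> simp [mul_assoc]
    simpa using eq_zero_of_mem_of_smul_mem_line L hdisc (inv_ne_zero hlam0) hc hyL hstep
end

section
/- Let N, p, q be real numbers with N > 2 and q ≠ 0, and let a, b be nonzero real numbers. If -b/a = (N - 2p - √(N²-4))/(2q) and a/b = (N - 2p + √(N²-4))/(2q), then q² = p·(N - p) - 1. (This is the arithmetic criterion for a Sol lattice to admit the point group C₄.) -/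
/-! The two ratios `-b/a` and `a/b` multiply to `-1`. Their prescribed values are `(m ∓ s)/(2q)`
with `m = N - 2p` and `s = √(N² - 4)`, whose product is `(m² - s²)/(4q²) = (4 - 4Np + 4p²)/(4q²)`;
equating it with `-1` is the criterion. -/

theorem neg_div_mul_div_self {K : Type*} [Field K] {a b : K} (ha : a ≠ 0) (hb : b ≠ 0) :
    -b / a * (a / b) = -1 := by
  field_simp

theorem sq_sub_sq_eq_of_div_mul_div_eq_neg_one {K : Type*} [Field K] {m s q : K}
    (h2 : (2 : K) ≠ 0) (hq : q ≠ 0) (h : (m - s) / (2 * q) * ((m + s) / (2 * q)) = -1) :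
    m ^ 2 - s ^ 2 = -4 * q ^ 2 := by
  field_simp at h
  linear_combination h

/-- if `N > 2`, `q ≠ 0`, `a, b ≠ 0`,
`-b/a = (N - 2p - √(N²-4))/(2q)` and `a/b = (N - 2p + √(N²-4))/(2q)`,
then `q² = p(N-p) - 1` (the criterion for point group `C₄`). -/
theorem c4_point_group_criterion (N p q a b : ℝ) (hN : 2 < N) (hq : q ≠ 0)
    (ha : a ≠ 0) (hb : b ≠ 0)
    (h1 : -b / a = (N - 2 * p - Real.sqrt (N ^ 2 - 4)) / (2 * q))
    (h2 : a / b = (N - 2 * p + Real.sqrt (N ^ 2 - 4)) / (2 * q)) :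
    q ^ 2 = p * (N - p) - 1 := by
  have hprod := neg_div_mul_div_self ha hb
  rw [h1, h2] at hprod
  have hdisc := sq_sub_sq_eq_of_div_mul_div_eq_neg_one two_ne_zero hq hprod
  rw [Real.sq_sqrt (by nlinarith)] at hdisc
  linear_combination hdisc / 4
end
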